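/- arXiv:2006.11829 — 2 statements merged into one kernel-verified Lean document; each statement's English description precedes it below -/
import Mathlib

section
/- Let A be a 2m×2m real positive definite matrix. Then its symplectic numerical range is the closed half-line W_s(A) = [d₁(A), ∞), where d₁(A) is the smallest symplectic eigenvalue of A. -/
/-!
Write `A = aᵀ a` (e.g. `a = √A`). The Hermitian matrix `G = i a J aᵀ` has the same characteristic
polynomial as `i J A`, so all its eigenvalues have modulus at least `d₁`; hence
`d₁ |⟨y, G y⟩| ≤ ‖G y‖²` for every `y`. Taking `y` with `G y = a z` for `z = u + i v` turns this into
`2 d₁ |⟨u, J v⟩| ≤ ⟨u, A u⟩ + ⟨v, A v⟩`, so `W_s(A) ⊆ [d₁, ∞)`.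

Conversely, the real and imaginary parts of an eigenvector of `i J A` for `d₁`, suitably normalised,
give `u, v` with `⟨u, J v⟩ = 1` and `⟨u, A u⟩ = ⟨v, A v⟩ = d₁`; the pairs `(t u, t⁻¹ v)` then
realise every value `(t² + t⁻²) d₁ / 2 ≥ d₁`.
-/

open Matrix Polynomial

noncomputable section
namespace Szego

/-- `J_{2m}`: direct sum of `m` copies of `[[0,1],[-1,0]]`. -/
def JMat (m : ℕ) : Matrix (Fin (2*m)) (Fin (2*m)) ℝ :=
  fun i j =>
    if (j : ℕ) = (i : ℕ) + 1 ∧ (i : ℕ) % 2 = 0 then 1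
    else if (i : ℕ) = (j : ℕ) + 1 ∧ (j : ℕ) % 2 = 0 then -1 else 0

/-- `d : Fin m → ℝ` is the increasingly ordered tuple of symplectic eigenvalues of the
`2m × 2m` real matrix `A`: the `d j` are positive, and the eigenvalues of `i J_{2m} A`
counted with algebraic multiplicity (i.e. the roots of its characteristic polynomial)
are exactly `± d j`. -/
def IsSymplecticSpectrum {m : ℕ} (A : Matrix (Fin (2*m)) (Fin (2*m)) ℝ)
    (d : Fin m → ℝ) : Prop :=
  Monotone d ∧ (∀ j, 0 < d j) ∧
    Matrix.charpoly (Complex.I • ((JMat m).map Complex.ofReal * A.map Complex.ofReal)) =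
      ∏ j, (X - C (d j : ℂ)) * (X + C (d j : ℂ))

/-- The symplectic numerical range
`W_s(A) = { (⟨u,Au⟩ + ⟨v,Av⟩)/2 : u,v ∈ ℝ^{2m}, ⟨u, J_{2m} v⟩ = 1 }`. -/
def symplecticNumericalRange {m : ℕ} (A : Matrix (Fin (2*m)) (Fin (2*m)) ℝ) : Set ℝ :=
  { x | ∃ u v : Fin (2*m) → ℝ, u ⬝ᵥ (JMat m).mulVec v = 1 ∧
      x = (u ⬝ᵥ A.mulVec u + v ⬝ᵥ A.mulVec v) / 2 }

open scoped InnerProductSpace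

theorem _root_.LinearMap.IsSymmetric.mul_norm_inner_self_le {𝕜 E ι : Type*} [RCLike 𝕜]
    [NormedAddCommGroup E] [InnerProductSpace 𝕜 E] [Fintype ι] {T : E →ₗ[𝕜] E}
    (hT : T.IsSymmetric) (b : OrthonormalBasis ι 𝕜 E) (μ : ι → ℝ)
    (hb : ∀ i, T (b i) = (μ i : 𝕜) • b i) {c : ℝ} (hc : 0 ≤ c) (hμ : ∀ i, c ≤ |μ i|) (x : E) :
    c * ‖⟪x, T x⟫_𝕜‖ ≤ ‖T x‖ ^ 2 := by
  have hcoord i : ⟪b i, T x⟫_𝕜 = μ i * ⟪b i, x⟫_𝕜 := by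
    rw [← hT, hb, inner_smul_left, RCLike.conj_ofReal]
  calc c * ‖⟪x, T x⟫_𝕜‖ = c * ‖∑ i, ⟪x, b i⟫_𝕜 * ⟪b i, T x⟫_𝕜‖ := by
        rw [b.sum_inner_mul_inner]
    _ ≤ c * ∑ i, ‖⟪x, b i⟫_𝕜 * ⟪b i, T x⟫_𝕜‖ := by gcongr; exact norm_sum_le _ _
    _ = ∑ i, c * |μ i| * ‖⟪b i, x⟫_𝕜‖ ^ 2 := by
        rw [Finset.mul_sum]
        refine Finset.sum_congr rfl fun i _ => ?_
        rw [hcoord, norm_mul, norm_mul, ← inner_conj_symm, RCLike.norm_conj, RCLike.norm_ofReal]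
        ring
    _ ≤ ∑ i, |μ i| * |μ i| * ‖⟪b i, x⟫_𝕜‖ ^ 2 := by
        gcongr with i; exact hμ i
    _ = ‖T x‖ ^ 2 := by
        rw [← b.sum_sq_norm_inner_right]
        refine Finset.sum_congr rfl fun i _ => ?_
        rw [hcoord, norm_mul, RCLike.norm_ofReal]
        ring

theorem exists_mul_self_add_inv_mul_self_eq {r : ℝ} (hr : 2 ≤ r) :
    ∃ t : ℝ, t ≠ 0 ∧ t * t + t⁻¹ * t⁻¹ = r := by
  have hdisc : √(r ^ 2 - 4) ^ 2 = r ^ 2 - 4 := Real.sq_sqrt (by nlinarith)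
  set s := (r + √(r ^ 2 - 4)) / 2
  have hs : 0 < s := by positivity
  have hsinv : s⁻¹ = (r - √(r ^ 2 - 4)) / 2 := by
    refine inv_eq_of_mul_eq_one_right ?_
    linear_combination -hdisc / 4
  refine ⟨√s, (Real.sqrt_pos.2 hs).ne', ?_⟩
  rw [← mul_inv, Real.mul_self_sqrt hs.le, hsinv]
  ring

theorem le_norm_of_isRoot_prod {ι : Type*} [Fintype ι] {d : ι → ℝ} {c : ℝ} (hd : ∀ j, c ≤ d j)
    {μ : ℂ} (h : (∏ j, (X - C (d j : ℂ)) * (X + C (d j : ℂ))).IsRoot μ) : c ≤ ‖μ‖ := by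
  rw [IsRoot, eval_prod, Finset.prod_eq_zero_iff] at h
  obtain ⟨j, -, hj⟩ := h
  simp only [eval_mul, eval_sub, eval_add, eval_X, eval_C, mul_eq_zero, sub_eq_zero,
    add_eq_zero_iff_eq_neg] at hj
  rcases hj with rfl | rfl <;>
    simpa [Complex.norm_real] using (hd j).trans (le_abs_self _)

variable {n : Type*} [Fintype n]

theorem dotProduct_mulVec_eq_neg_of_transpose_eq_neg {R : Type*} [CommRing R]
    {J : Matrix n n R} (hJ : Jᵀ = -J) (u v : n → R) : u ⬝ᵥ J *ᵥ v = -(v ⬝ᵥ J *ᵥ u) := by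
  rw [← dotProduct_transpose_mulVec, hJ, neg_mulVec, dotProduct_neg]

omit [Fintype n] in
theorem map_ofReal_conjTranspose (M : Matrix n n ℝ) :
    (M.map Complex.ofReal)ᴴ = Mᵀ.map Complex.ofReal := by
  rw [← conjTranspose_map _ (fun x => by simp)]
  rfl

theorem map_ofReal_mul (M N : Matrix n n ℝ) :
    (M * N).map Complex.ofReal = M.map Complex.ofReal * N.map Complex.ofReal :=
  Matrix.map_mul (f := Complex.ofRealHom)

theorem map_ofReal_mulVec (M : Matrix n n ℝ) (u : n → ℝ) :
    M.map Complex.ofReal *ᵥ (fun i => (u i : ℂ)) = fun i => ((M *ᵥ u) i : ℂ) :=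
  funext fun i => (RingHom.map_mulVec Complex.ofRealHom M u i).symm

theorem ofReal_dotProduct (u v : n → ℝ) :
    (fun i => (u i : ℂ)) ⬝ᵥ (fun i => (v i : ℂ)) = ((u ⬝ᵥ v : ℝ) : ℂ) :=
  (RingHom.map_dotProduct Complex.ofRealHom u v).symm

theorem star_dotProduct_map_ofReal_mulVec (M : Matrix n n ℝ) (u v : n → ℝ) :
    star ((fun i => (u i : ℂ)) + Complex.I • fun i => (v i : ℂ)) ⬝ᵥ
        M.map Complex.ofReal *ᵥ ((fun i => (u i : ℂ)) + Complex.I • fun i => (v i : ℂ)) =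
      ↑(u ⬝ᵥ M *ᵥ u + v ⬝ᵥ M *ᵥ v) + Complex.I * ↑(u ⬝ᵥ M *ᵥ v - v ⬝ᵥ M *ᵥ u) := by
  have hstar (w : n → ℝ) : star (fun i => (w i : ℂ)) = fun i => (w i : ℂ) := by
    funext i; simp
  simp only [star_add, star_smul, hstar, Complex.star_def, Complex.conj_I, mulVec_add,
    mulVec_smul, map_ofReal_mulVec, add_dotProduct, dotProduct_add, smul_dotProduct,
    dotProduct_smul, ofReal_dotProduct, smul_eq_mul]
  push_cast
  ring_nf
  rw [Complex.I_sq]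
  ring

theorem re_map_ofReal_mulVec (M : Matrix n n ℝ) (x : n → ℂ) (i : n) :
    ((M.map Complex.ofReal *ᵥ x) i).re = (M *ᵥ fun j => (x j).re) i := by
  simp [mulVec, dotProduct, Complex.re_sum]

theorem im_map_ofReal_mulVec (M : Matrix n n ℝ) (x : n → ℂ) (i : n) :
    ((M.map Complex.ofReal *ᵥ x) i).im = (M *ᵥ fun j => (x j).im) i := by
  simp [mulVec, dotProduct, Complex.im_sum]

theorem smul_dotProduct_mulVec_smul {R : Type*} [CommSemiring R] (M : Matrix n n R) (a b : R)
    (x y : n → R) :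
    (a • x) ⬝ᵥ M *ᵥ (b • y) = a * b * (x ⬝ᵥ M *ᵥ y) := by
  rw [mulVec_smul, smul_dotProduct, dotProduct_smul, smul_eq_mul, smul_eq_mul, mul_assoc]

theorem exists_dotProduct_mulVec_eq_one_of_mulVec_eq {J A : Matrix n n ℝ} (hJ : Jᵀ = -J)
    (hA : A.PosDef) {d : ℝ} (hd : 0 < d) {p q : n → ℝ} (hpq : p ≠ 0 ∨ q ≠ 0)
    (hp : A *ᵥ p = -d • J *ᵥ q) (hq : A *ᵥ q = d • J *ᵥ p) :
    ∃ u v : n → ℝ, u ⬝ᵥ J *ᵥ v = 1 ∧ u ⬝ᵥ A *ᵥ u = d ∧ v ⬝ᵥ A *ᵥ v = d := by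
  set s := q ⬝ᵥ J *ᵥ p
  have hpAp : p ⬝ᵥ A *ᵥ p = d * s := by
    rw [hp, dotProduct_smul, dotProduct_mulVec_eq_neg_of_transpose_eq_neg hJ, smul_eq_mul,
      neg_mul_neg]
  have hqAq : q ⬝ᵥ A *ᵥ q = d * s := by rw [hq, dotProduct_smul, smul_eq_mul]
  have hs : 0 < s := by
    refine pos_of_mul_pos_right ?_ hd.le
    rcases hpq with h | h
    · simpa [hpAp] using hA.dotProduct_mulVec_pos h
    · simpa [hqAq] using hA.dotProduct_mulVec_pos h
  have hsqrt : (√s)⁻¹ * (√s)⁻¹ = s⁻¹ := by rw [← mul_inv, Real.mul_self_sqrt hs.le]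
  refine ⟨(√s)⁻¹ • q, (√s)⁻¹ • p, ?_, ?_, ?_⟩
  · rw [smul_dotProduct_mulVec_smul, hsqrt, inv_mul_cancel₀ hs.ne']
  · rw [smul_dotProduct_mulVec_smul, hsqrt, hqAq]
    field_simp
  · rw [smul_dotProduct_mulVec_smul, hsqrt, hpAp]
    field_simp

variable [DecidableEq n]

theorem _root_.Matrix.IsHermitian.mul_norm_dotProduct_mulVec_le {𝕜 : Type*} [RCLike 𝕜]
    {N : Matrix n n 𝕜} (hN : N.IsHermitian) {c : ℝ} (hc : 0 ≤ c)
    (hroots : ∀ μ : 𝕜, N.charpoly.IsRoot μ → c ≤ ‖μ‖) (y : n → 𝕜) :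
    c * ‖star y ⬝ᵥ N *ᵥ y‖ ≤ RCLike.re (star (N *ᵥ y) ⬝ᵥ N *ᵥ y) := by
  have heig i : c ≤ |hN.eigenvalues i| := by
    rw [← RCLike.norm_ofReal (K := 𝕜)]
    refine hroots _ ?_
    rw [hN.charpoly_eq, IsRoot, eval_prod]
    exact Finset.prod_eq_zero (Finset.mem_univ i) (by simp)
  have hbasis i : toEuclideanLin N (hN.eigenvectorBasis i) =
      (hN.eigenvalues i : 𝕜) • hN.eigenvectorBasis i := by
    ext1
    rw [toLpLin_apply, WithLp.ofLp_smul, hN.mulVec_eigenvectorBasis]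
    simp [RCLike.real_smul_eq_coe_mul]
  have := (isSymmetric_toEuclideanLin_iff.mpr hN).mul_norm_inner_self_le hN.eigenvectorBasis
    hN.eigenvalues hbasis hc heig (WithLp.toLp 2 y)
  rw [@norm_sq_eq_re_inner 𝕜, EuclideanSpace.inner_eq_star_dotProduct,
    EuclideanSpace.inner_eq_star_dotProduct] at this
  simpa [dotProduct_comm] using this

theorem mul_norm_dotProduct_mulVec_le_of_isRoot {a K : Matrix n n ℂ}
    (ha : IsUnit a.det) (hK : Kᴴ = -K) (hKK : K * K = -1) {c : ℝ} (hc : 0 ≤ c)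
    (hroots : ∀ μ : ℂ, (Complex.I • (K * (aᴴ * a))).charpoly.IsRoot μ → c ≤ ‖μ‖) (z : n → ℂ) :
    c * ‖star z ⬝ᵥ K *ᵥ z‖ ≤ (star z ⬝ᵥ (aᴴ * a) *ᵥ z).re := by
  set G := Complex.I • (a * K * aᴴ)
  have hG : G.IsHermitian := by
    simp only [G, IsHermitian, conjTranspose_smul, conjTranspose_mul, conjTranspose_conjTranspose,
      hK, Complex.star_def, Complex.conj_I, Matrix.mul_neg, Matrix.neg_mul, neg_smul, smul_neg,
      neg_neg, Matrix.mul_assoc]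
  have hGcharpoly : G.charpoly = (Complex.I • (K * (aᴴ * a))).charpoly := by
    rw [show G = a * (Complex.I • (K * aᴴ)) by simp [G, Matrix.mul_assoc], charpoly_mul_comm]
    simp [Matrix.mul_assoc]
  set L := Complex.I • ((aᴴ)⁻¹ * K)
  have haH : IsUnit aᴴ.det := by rw [det_conjTranspose]; exact ha.star
  have hGL : G * L = a := by
    simp only [G, L, Matrix.smul_mul, Matrix.mul_smul, smul_smul, Complex.I_mul_I]
    rw [Matrix.mul_assoc, Matrix.mul_assoc, ← Matrix.mul_assoc aᴴ, mul_nonsing_inv _ haH,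
      Matrix.one_mul, hKK]
    simp
  have hLa : Lᴴ * a = Complex.I • K := by
    simp only [L, conjTranspose_smul, conjTranspose_mul, conjTranspose_nonsing_inv,
      conjTranspose_conjTranspose, hK, Complex.star_def, Complex.conj_I, Matrix.smul_mul,
      neg_smul, smul_neg, Matrix.neg_mul, neg_neg, Matrix.mul_assoc, nonsing_inv_mul _ ha,
      Matrix.mul_one]
  have hleft : star (L *ᵥ z) ⬝ᵥ a *ᵥ z = Complex.I * (star z ⬝ᵥ K *ᵥ z) := by
    rw [star_mulVec, ← dotProduct_mulVec, mulVec_mulVec, hLa, smul_mulVec, dotProduct_smul,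
      smul_eq_mul]
  have hright : star (a *ᵥ z) ⬝ᵥ a *ᵥ z = star z ⬝ᵥ (aᴴ * a) *ᵥ z := by
    rw [star_mulVec, ← dotProduct_mulVec, mulVec_mulVec]
  have key := hG.mul_norm_dotProduct_mulVec_le hc (fun μ hμ => hroots μ (hGcharpoly ▸ hμ)) (L *ᵥ z)
  rwa [mulVec_mulVec, hGL, hleft, hright, norm_mul, Complex.norm_I, one_mul] at key

theorem map_ofReal_mul_self_eq_neg_one {J : Matrix n n ℝ} (hJJ : J * J = -1) :
    J.map Complex.ofReal * J.map Complex.ofReal = -1 := by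
  rw [← map_ofReal_mul, hJJ, Matrix.map_neg _ Complex.ofReal_neg,
    Matrix.map_one _ Complex.ofReal_zero Complex.ofReal_one]

theorem det_map_ofReal (M : Matrix n n ℝ) : (M.map Complex.ofReal).det = M.det :=
  (Complex.ofRealHom.map_det M).symm

open scoped MatrixOrder in
theorem _root_.Matrix.PosDef.exists_transpose_mul_self {A : Matrix n n ℝ} (hA : A.PosDef) :
    ∃ a : Matrix n n ℝ, aᵀ * a = A ∧ IsUnit a.det := by
  have hsqrt : (CFC.sqrt A)ᵀ * CFC.sqrt A = A := by
    rw [← conjTranspose_eq_transpose_of_trivial, (CFC.sqrt_nonneg A).posSemidef.1.eq,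
      CFC.sqrt_mul_sqrt_self A hA.posSemidef.nonneg]
  refine ⟨CFC.sqrt A, hsqrt, isUnit_of_mul_isUnit_right (x := (CFC.sqrt A)ᵀ.det) ?_⟩
  rw [← det_mul, hsqrt]
  exact hA.det_pos.ne'.isUnit

theorem two_mul_mul_abs_dotProduct_mulVec_le_of_isRoot {J A : Matrix n n ℝ} (hJ : Jᵀ = -J)
    (hJJ : J * J = -1) (hA : A.PosDef) {c : ℝ} (hc : 0 ≤ c)
    (hroots : ∀ μ : ℂ,
      (Complex.I • (J.map Complex.ofReal * A.map Complex.ofReal)).charpoly.IsRoot μ → c ≤ ‖μ‖)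
    (u v : n → ℝ) :
    2 * c * |u ⬝ᵥ J *ᵥ v| ≤ u ⬝ᵥ A *ᵥ u + v ⬝ᵥ A *ᵥ v := by
  obtain ⟨a, haA, ha⟩ := hA.exists_transpose_mul_self
  have hmap : (a.map Complex.ofReal)ᴴ * a.map Complex.ofReal = A.map Complex.ofReal := by
    rw [map_ofReal_conjTranspose, ← haA, map_ofReal_mul]
  have key := mul_norm_dotProduct_mulVec_le_of_isRoot (K := J.map Complex.ofReal)
    (by rw [det_map_ofReal]; exact ha.map Complex.ofRealHom)
    (by rw [map_ofReal_conjTranspose, hJ, Matrix.map_neg _ Complex.ofReal_neg])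
    (map_ofReal_mul_self_eq_neg_one hJJ)
    hc (hmap ▸ hroots) ((fun i => (u i : ℂ)) + Complex.I • fun i => (v i : ℂ))
  have hJself (w : n → ℝ) : w ⬝ᵥ J *ᵥ w = 0 :=
    self_eq_neg.mp (dotProduct_mulVec_eq_neg_of_transpose_eq_neg hJ w w)
  have hAvu : v ⬝ᵥ A *ᵥ u = u ⬝ᵥ A *ᵥ v := by
    rw [← dotProduct_transpose_mulVec, ← conjTranspose_eq_transpose_of_trivial,
      hA.isHermitian.eq]
  rw [hmap, star_dotProduct_map_ofReal_mulVec, star_dotProduct_map_ofReal_mulVec, hJself, hJself,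
    dotProduct_mulVec_eq_neg_of_transpose_eq_neg hJ v u, hAvu] at key
  simp only [add_zero, sub_self, Complex.ofReal_zero, mul_zero, zero_add, Complex.ofReal_re,
    sub_neg_eq_add, ← two_mul, norm_mul, Complex.norm_I, one_mul, Complex.norm_real,
    Real.norm_eq_abs, abs_two] at key
  linarith

theorem _root_.Matrix.exists_mulVec_eq_smul_of_isRoot_charpoly {K : Type*} [Field K]
    {M : Matrix n n K} {μ : K} (h : M.charpoly.IsRoot μ) : ∃ x ≠ 0, M *ᵥ x = μ • x := by
  rw [← charpoly_toLin', ← Module.End.hasEigenvalue_iff_isRoot_charpoly] at h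
  obtain ⟨x, hx⟩ := h.exists_hasEigenvector
  exact ⟨x, hx.2, hx.apply_eq_smul⟩

theorem exists_mulVec_eq_smul_mulVec_of_isRoot {J A : Matrix n n ℝ} (hJJ : J * J = -1) {d : ℝ}
    (hroot : (Complex.I • (J.map Complex.ofReal * A.map Complex.ofReal)).charpoly.IsRoot d) :
    ∃ p q : n → ℝ, (p ≠ 0 ∨ q ≠ 0) ∧ A *ᵥ p = -d • J *ᵥ q ∧ A *ᵥ q = d • J *ᵥ p := by
  obtain ⟨x, hx0, hx⟩ := exists_mulVec_eq_smul_of_isRoot_charpoly hroot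
  have hAx : A.map Complex.ofReal *ᵥ x =
      (Complex.I * d) • (J.map Complex.ofReal *ᵥ x) := calc
    _ = -(J.map Complex.ofReal * J.map Complex.ofReal * A.map Complex.ofReal) *ᵥ x := by
      rw [map_ofReal_mul_self_eq_neg_one hJJ, Matrix.neg_mul, neg_neg, Matrix.one_mul]
    _ = Complex.I • J.map Complex.ofReal *ᵥ
          ((Complex.I • (J.map Complex.ofReal * A.map Complex.ofReal)) *ᵥ x) := by
      simp only [smul_mulVec, mulVec_smul, mulVec_mulVec, smul_smul, Complex.I_mul_I,
        neg_one_smul, neg_mulVec, Matrix.mul_assoc]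
    _ = (Complex.I * d) • (J.map Complex.ofReal *ᵥ x) := by
      rw [hx, mulVec_smul, smul_smul]
  refine ⟨fun j => (x j).re, fun j => (x j).im, ?_, ?_, ?_⟩
  · by_contra! h
    exact hx0 (funext fun j => Complex.ext (congr_fun h.1 j) (congr_fun h.2 j))
  · funext i
    simpa [re_map_ofReal_mulVec, im_map_ofReal_mulVec] using congr_arg Complex.re (congr_fun hAx i)
  · funext i
    simpa [re_map_ofReal_mulVec, im_map_ofReal_mulVec] using congr_arg Complex.im (congr_fun hAx i)

theorem exists_dotProduct_mulVec_eq_one_of_isRoot {J A : Matrix n n ℝ} (hJ : Jᵀ = -J)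
    (hJJ : J * J = -1) (hA : A.PosDef) {d : ℝ} (hd : 0 < d)
    (hroot : (Complex.I • (J.map Complex.ofReal * A.map Complex.ofReal)).charpoly.IsRoot d)
    {y : ℝ} (hy : d ≤ y) :
    ∃ u v : n → ℝ, u ⬝ᵥ J *ᵥ v = 1 ∧ u ⬝ᵥ A *ᵥ u + v ⬝ᵥ A *ᵥ v = 2 * y := by
  obtain ⟨p, q, hpq, hp, hq⟩ := exists_mulVec_eq_smul_mulVec_of_isRoot hJJ hroot
  obtain ⟨u, v, huv, hu, hv⟩ := exists_dotProduct_mulVec_eq_one_of_mulVec_eq hJ hA hd hpq hp hq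
  obtain ⟨t, ht, hteq⟩ := exists_mul_self_add_inv_mul_self_eq (r := 2 * y / d)
    (by rw [le_div_iff₀ hd]; linarith)
  refine ⟨t • u, t⁻¹ • v, ?_, ?_⟩
  · rw [smul_dotProduct_mulVec_smul, huv, mul_inv_cancel₀ ht, one_mul]
  · rw [smul_dotProduct_mulVec_smul, smul_dotProduct_mulVec_smul, hu, hv, ← add_mul, hteq]
    field_simp

theorem JMat_apply (m : ℕ) (i j : Fin (2*m)) :
    JMat m i j = if (j : ℕ) = (i : ℕ) + 1 ∧ (i : ℕ) % 2 = 0 then 1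
      else if (i : ℕ) = (j : ℕ) + 1 ∧ (j : ℕ) % 2 = 0 then -1 else 0 := rfl

theorem JMat_transpose (m : ℕ) : (JMat m)ᵀ = -JMat m := by
  ext i j
  simp only [transpose_apply, Matrix.neg_apply, JMat_apply]
  split_ifs <;> first | (exfalso; omega) | norm_num

theorem JMat_mul_self (m : ℕ) : JMat m * JMat m = -1 := by
  ext i k
  have hi := i.isLt
  let i' : Fin (2*m) := ⟨if (i : ℕ) % 2 = 0 then i + 1 else i - 1, by split_ifs <;> omega⟩
  have hrow : ∀ j, j ≠ i' → JMat m i j = 0 := fun j hj => by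
    have : (j : ℕ) ≠ i' := fun h => hj (Fin.ext h)
    simp only [JMat_apply, i'] at this ⊢
    split_ifs at this ⊢ <;> first | (exfalso; omega) | rfl
  rw [mul_apply, Finset.sum_eq_single i' (fun j _ hj => by rw [hrow j hj, zero_mul])
    (by simp)]
  simp only [JMat_apply, i', Matrix.neg_apply, Matrix.one_apply, Fin.ext_iff]
  split_ifs <;> first | (exfalso; omega) | norm_num

/-- for a `2m × 2m` real positive definite matrix `A`,
`W_s(A) = [d₁(A), ∞)` where `d₁(A)` is the smallest symplectic eigenvalue of `A`. -/
theorem statement6 (m : ℕ) (hm : 0 < m) (A : Matrix (Fin (2*m)) (Fin (2*m)) ℝ)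
    (hA : A.PosDef) (d : Fin m → ℝ) (hd : IsSymplecticSpectrum A d) :
    symplecticNumericalRange A = Set.Ici (d ⟨0, hm⟩) := by
  obtain ⟨hmono, hpos, hcharpoly⟩ := hd
  have hroots (μ : ℂ) (hμ : (Complex.I • ((JMat m).map Complex.ofReal *
      A.map Complex.ofReal)).charpoly.IsRoot μ) : d ⟨0, hm⟩ ≤ ‖μ‖ :=
    le_norm_of_isRoot_prod (fun j => hmono (Nat.zero_le _)) (hcharpoly ▸ hμ)
  have hroot : (Complex.I • ((JMat m).map Complex.ofReal *
      A.map Complex.ofReal)).charpoly.IsRoot (d ⟨0, hm⟩ : ℂ) := by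
    rw [hcharpoly, IsRoot, eval_prod]
    exact Finset.prod_eq_zero (Finset.mem_univ ⟨0, hm⟩) (by simp)
  ext y
  constructor
  · rintro ⟨u, v, huv, rfl⟩
    have := two_mul_mul_abs_dotProduct_mulVec_le_of_isRoot (JMat_transpose m) (JMat_mul_self m)
      hA (hpos _).le hroots u v
    rw [huv, abs_one] at this
    exact Set.mem_Ici.2 (by linarith)
  · intro hy
    obtain ⟨u, v, huv, huv'⟩ := exists_dotProduct_mulVec_eq_one_of_isRoot (JMat_transpose m)
      (JMat_mul_self m) hA (hpos _) hroot hy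
    exact ⟨u, v, huv, by rw [huv']; ring⟩

end Szego
end
end

section
/- Let P be a k×k real positive definite matrix, let P̂ = P ⊕ P be the 2k×2k block diagonal matrix diag(P,P), and let K be the 2k×2k matrix [[0, I_k],[−I_k, 0]]. Then the infimum of the K-symplectic numerical range W_s^K(P̂) = { (⟨u,P̂u⟩ + ⟨v,P̂v⟩)/2 : u,v ∈ ℝ^{2k}, ⟨u, K v⟩ = 1 } equals the smallest eigenvalue of P. -/
open Matrix

/-!
Since `P - λ_min(P) • 1` is positive semidefinite, `⟨x, P̂ x⟩ ≥ λ_min(P) ⟨x, x⟩` for every `x`.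
Since `K` is orthogonal, `2 ⟨u, K v⟩ ≤ ⟨u, u⟩ + ⟨K v, K v⟩ = ⟨u, u⟩ + ⟨v, v⟩`, so under the
constraint `⟨u, K v⟩ = 1` every point of the numerical range is at least `λ_min(P)`. The bound is
attained at `u = (w, 0)`, `v = (0, w)` for a unit eigenvector `w` of `λ_min(P)`.
-/

namespace Matrix

variable {n : Type*} [Fintype n]

section
variable [DecidableEq n]
open scoped ComplexOrder

theorem IsHermitian.posSemidef_sub_smul_one {𝕜 : Type*} [RCLike 𝕜] {A : Matrix n n 𝕜}
    (hA : A.IsHermitian) {c : ℝ} (hc : ∀ i, c ≤ hA.eigenvalues i) :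
    (A - (c : 𝕜) • 1).PosSemidef := by
  have hdiag : diagonal (RCLike.ofReal ∘ (hA.eigenvalues - fun _ ↦ c)) =
      diagonal (RCLike.ofReal ∘ hA.eigenvalues) - (c : 𝕜) • (1 : Matrix n n 𝕜) := by
    rw [← diagonal_one, ← diagonal_smul, diagonal_sub]
    congr 1
    ext i
    simp
  have hshift : A - (c : 𝕜) • 1 = Unitary.conjStarAlgAut 𝕜 _ hA.eigenvectorUnitary
      (diagonal (RCLike.ofReal ∘ (hA.eigenvalues - fun _ ↦ c))) := by
    conv_lhs => rw [hA.spectral_theorem]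
    rw [hdiag, map_sub, map_smul, map_one]
  rw [hshift, Unitary.conjStarAlgAut_apply, Unitary.isUnit_coe.posSemidef_star_right_conjugate_iff,
    posSemidef_diagonal_iff]
  intro i
  simpa using hc i

theorem IsHermitian.mul_dotProduct_self_le {A : Matrix n n ℝ} (hA : A.IsHermitian) {c : ℝ}
    (hc : ∀ i, c ≤ hA.eigenvalues i) (x : n → ℝ) : c * (x ⬝ᵥ x) ≤ x ⬝ᵥ A *ᵥ x := by
  have := (hA.posSemidef_sub_smul_one hc).dotProduct_mulVec_nonneg x
  simpa [sub_mulVec, smul_mulVec, dotProduct_sub, dotProduct_smul] using this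

theorem IsHermitian.exists_dotProduct_self_eq_one_mulVec_eq_smul {A : Matrix n n ℝ}
    (hA : A.IsHermitian) (j : n) :
    ∃ w : n → ℝ, w ⬝ᵥ w = 1 ∧ A *ᵥ w = hA.eigenvalues j • w := by
  refine ⟨_, ?_, hA.mulVec_eigenvectorBasis j⟩
  have h := inner_self_eq_one_of_norm_eq_one (𝕜 := ℝ) (hA.eigenvectorBasis.orthonormal.1 j)
  rwa [EuclideanSpace.inner_eq_star_dotProduct, star_trivial] at h

end

variable {m R : Type*} [Fintype m]

theorem mul_dotProduct_self_le_fromBlocks [CommSemiring R] [PartialOrder R] [IsOrderedRing R]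
    {A : Matrix m m R} {D : Matrix n n R} {c : R} (hA : ∀ y, c * (y ⬝ᵥ y) ≤ y ⬝ᵥ A *ᵥ y)
    (hD : ∀ z, c * (z ⬝ᵥ z) ≤ z ⬝ᵥ D *ᵥ z) (x : m ⊕ n → R) :
    c * (x ⬝ᵥ x) ≤ x ⬝ᵥ fromBlocks A 0 0 D *ᵥ x := by
  obtain ⟨y, z, rfl⟩ : ∃ y z, x = Sum.elim y z := ⟨_, _, (Sum.elim_comp_inl_inr x).symm⟩
  simpa [fromBlocks_mulVec, sumElim_dotProduct_sumElim, mul_add] using add_le_add (hA _) (hD _)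

theorem two_mul_dotProduct_le [CommRing R] [LinearOrder R] [IsStrictOrderedRing R]
    (x y : n → R) : 2 * (x ⬝ᵥ y) ≤ x ⬝ᵥ x + y ⬝ᵥ y := by
  simp only [dotProduct, Finset.mul_sum, ← Finset.sum_add_distrib]
  gcongr with i
  nlinarith [two_mul_le_add_sq (x i) (y i)]

theorem dotProduct_self_fromBlocks_symplectic_mulVec [CommRing R] [DecidableEq m]
    (v : m ⊕ m → R) :
    let K : Matrix (m ⊕ m) (m ⊕ m) R := fromBlocks 0 1 (-1) 0
    (K *ᵥ v) ⬝ᵥ (K *ᵥ v) = v ⬝ᵥ v := by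
  obtain ⟨y, z, rfl⟩ : ∃ y z, v = Sum.elim y z := ⟨_, _, (Sum.elim_comp_inl_inr v).symm⟩
  simp [fromBlocks_mulVec, sumElim_dotProduct_sumElim, neg_mulVec, add_comm]

theorem two_mul_dotProduct_fromBlocks_symplectic_mulVec_le [CommRing R] [LinearOrder R]
    [IsStrictOrderedRing R] [DecidableEq m] (u v : m ⊕ m → R) :
    2 * (u ⬝ᵥ (fromBlocks 0 1 (-1) 0 : Matrix (m ⊕ m) (m ⊕ m) R) *ᵥ v) ≤ u ⬝ᵥ u + v ⬝ᵥ v :=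
  dotProduct_self_fromBlocks_symplectic_mulVec v ▸ two_mul_dotProduct_le u _

end Matrix

namespace Szego

/-- for a `k × k` real positive definite matrix `P`, with
`P̂ = diag(P, P)` and `K = [[0, I],[-I, 0]]`, the infimum of the `K`-symplectic
numerical range `{ (⟨u,P̂u⟩+⟨v,P̂v⟩)/2 : ⟨u,Kv⟩ = 1 }` equals the smallest
eigenvalue of `P`. -/
theorem statement7 (k : ℕ) (hk : 0 < k) (P : Matrix (Fin k) (Fin k) ℝ)
    (hP : P.PosDef) :
    haveI : Nonempty (Fin k) := Fin.pos_iff_nonempty.mp hk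
    sInf { x : ℝ | ∃ u v : (Fin k ⊕ Fin k) → ℝ,
        u ⬝ᵥ (Matrix.fromBlocks (0 : Matrix (Fin k) (Fin k) ℝ) (1 : Matrix (Fin k) (Fin k) ℝ)
              (-1 : Matrix (Fin k) (Fin k) ℝ) (0 : Matrix (Fin k) (Fin k) ℝ)).mulVec v = 1 ∧
        x = (u ⬝ᵥ (Matrix.fromBlocks P 0 0 P).mulVec u
              + v ⬝ᵥ (Matrix.fromBlocks P 0 0 P).mulVec v) / 2 }
      = ⨅ i : Fin k, hP.1.eigenvalues i := by
  have : Nonempty (Fin k) := Fin.pos_iff_nonempty.mp hk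
  have hc : ∀ i, ⨅ i, hP.1.eigenvalues i ≤ hP.1.eigenvalues i :=
    ciInf_le (Finite.bddBelow_range _)
  obtain ⟨j, hj⟩ := exists_eq_ciInf_of_finite (f := hP.1.eigenvalues)
  refine IsLeast.csInf_eq ⟨?_, ?_⟩
  · obtain ⟨w, hw, hPw⟩ := hP.1.exists_dotProduct_self_eq_one_mulVec_eq_smul j
    refine ⟨Sum.elim w 0, Sum.elim 0 w, ?_, ?_⟩ <;>
      simp [fromBlocks_mulVec, sumElim_dotProduct_sumElim, hPw, hw, hj]
  · rintro _ ⟨u, v, huv, rfl⟩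
    have hquad := mul_dotProduct_self_le_fromBlocks (hP.1.mul_dotProduct_self_le hc)
      (hP.1.mul_dotProduct_self_le hc)
    have hnorm := mul_le_mul_of_nonneg_left
      (two_mul_dotProduct_fromBlocks_symplectic_mulVec_le u v) (hj ▸ hP.eigenvalues_pos j).le
    rw [huv] at hnorm
    linarith [hquad u, hquad v]

end Szego
end
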